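/- Fix integers d ≥ 1 and l ≥ 1. For sequences α(N) > 0 and μ_1(N), ..., μ_l(N) > 0 indexed by N ∈ ℕ, suppose μ_1·N^{(d+1)/d}/α → ∞ as N → ∞ and limsup_{N→∞} μ_i/μ_{i+1} < ∞ for each i ∈ {1, ..., l−1}. Then β_l·α/N^{1/d} → 0 as N → ∞, where β_l := (N·α^{(l-1)d}·∏_{i=1}^{l} μ_i)^{-1/((l-1)d+l)}. (Lemma 3.6 of the paper.) -/

import Mathlib

/-! With `x_i := α / (μ_i N^{(d+1)/d})` one has
`(β_l α / N^{1/d})^{(l-1)d+l} = ∏_{i=1}^{l} x_i`, since `(d+1) l / d = 1 + ((l-1)d+l) / d`.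
Every `x_i` tends to `0`: for `i = 1` this is the hypothesis on `μ_1`, and `μ_i ≲ μ_{i+1}`
passes the growth of `μ_i N^{(d+1)/d} / α` on to `μ_{i+1}`. -/

open Filter

/-- `beta d α μ l N` is the quantity
`β_l = (N · α^{(l-1)d} · ∏_{i=1}^{l} μ_i)^{-1/((l-1)d+l)}` from the paper,
where all quantities depend on `N` and the power is a real power. -/
noncomputable def beta (d : ℕ) (α : ℕ → ℝ) (μ : ℕ → ℕ → ℝ) (l N : ℕ) : ℝ :=
  ((N : ℝ) * α N ^ ((l - 1) * d) * ∏ i ∈ Finset.Icc 1 l, μ i N) ^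
    (-(1 / (((l - 1) * d + l : ℕ) : ℝ)))

section Growth

variable {ι : Type*} {L : Filter ι}

theorem Filter.Tendsto.mul_atTop_of_isBoundedUnder_div {a b c : ι → ℝ}
    (hac : Tendsto (fun x => a x * c x) L atTop) (hb : ∀ᶠ x in L, 0 < b x)
    (hc : ∀ᶠ x in L, 0 ≤ c x) (hab : IsBoundedUnder (· ≤ ·) L (fun x => a x / b x)) :
    Tendsto (fun x => b x * c x) L atTop := by
  obtain ⟨C, hC⟩ := hab
  have hC₁ : 0 < max C 1 := lt_max_of_lt_right one_pos
  refine tendsto_atTop_mono' L ?_ (hac.atTop_div_const hC₁)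
  filter_upwards [eventually_map.1 hC, hb, hc] with x hCx hbx hcx
  have hab : a x ≤ max C 1 * b x := (div_le_iff₀ hbx).1 (hCx.trans (le_max_left _ _))
  rw [div_le_iff₀ hC₁, mul_right_comm, mul_comm (b x)]
  exact mul_le_mul_of_nonneg_right hab hcx

theorem tendsto_mul_atTop_of_chain {μ : ℕ → ι → ℝ} {c : ι → ℝ} {n : ℕ}
    (h₁ : Tendsto (fun x => μ 1 x * c x) L atTop) (hc : ∀ᶠ x in L, 0 ≤ c x)
    (hμ : ∀ i, 1 ≤ i → i ≤ n → ∀ᶠ x in L, 0 < μ i x)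
    (hbdd : ∀ i, 1 ≤ i → i ≤ n - 1 → IsBoundedUnder (· ≤ ·) L (fun x => μ i x / μ (i + 1) x)) :
    ∀ i, 1 ≤ i → i ≤ n → Tendsto (fun x => μ i x * c x) L atTop := by
  intro i hi
  induction i, hi using Nat.le_induction with
  | base => exact fun _ => h₁
  | succ i hi ih =>
    intro hin
    exact (ih (by omega)).mul_atTop_of_isBoundedUnder_div (hμ (i + 1) (by omega) hin) hc
      (hbdd i hi (by omega))

end Growth

theorem beta_mul_div_rpow_pow {d l N : ℕ} (hd : 1 ≤ d) (hl : 1 ≤ l) (hN : 0 < N)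
    {α : ℕ → ℝ} {μ : ℕ → ℕ → ℝ} (hα : 0 < α N) (hμ : ∀ i ∈ Finset.Icc 1 l, 0 < μ i N) :
    (beta d α μ l N * α N / (N : ℝ) ^ (1 / (d : ℝ))) ^ ((l - 1) * d + l)
      = ∏ i ∈ Finset.Icc 1 l, α N / (μ i N * (N : ℝ) ^ (((d : ℝ) + 1) / d)) := by
  set M := (l - 1) * d + l
  have hNpos : (0 : ℝ) < N := by exact_mod_cast hN
  have hP : 0 < ∏ i ∈ Finset.Icc 1 l, μ i N := Finset.prod_pos hμ
  set S := (N : ℝ) * α N ^ ((l - 1) * d) * ∏ i ∈ Finset.Icc 1 l, μ i N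
  have hS : 0 < S := by positivity
  have hbeta : beta d α μ l N ^ M = S⁻¹ := by
    rw [beta, ← Real.rpow_natCast, ← Real.rpow_mul hS.le, neg_mul, one_div_mul_cancel
      (by positivity), Real.rpow_neg_one]
  have hNpow : ((N : ℝ) ^ (((d : ℝ) + 1) / d)) ^ l = N * ((N : ℝ) ^ (1 / (d : ℝ))) ^ M := by
    have hexp : ((d : ℝ) + 1) / d * l = 1 + 1 / d * M := by
      have hd' : (d : ℝ) ≠ 0 := by positivity
      simp only [M]
      push_cast [Nat.cast_sub hl]
      field_simp
      ring
    rw [← Real.rpow_natCast, ← Real.rpow_mul hNpos.le, ← Real.rpow_natCast,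
      ← Real.rpow_mul hNpos.le, hexp, Real.rpow_add hNpos, Real.rpow_one]
  rw [Finset.prod_div_distrib, Finset.prod_mul_distrib, Finset.prod_const, Finset.prod_const,
    Nat.card_Icc, Nat.add_sub_cancel, hNpow, div_pow, mul_pow, hbeta, pow_add]
  simp only [S]
  field_simp

theorem beta_mul_div_rpow_eq {d l N : ℕ} (hd : 1 ≤ d) (hl : 1 ≤ l) (hN : 0 < N)
    {α : ℕ → ℝ} {μ : ℕ → ℕ → ℝ} (hα : 0 < α N) (hμ : ∀ i ∈ Finset.Icc 1 l, 0 < μ i N) :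
    beta d α μ l N * α N / (N : ℝ) ^ (1 / (d : ℝ))
      = (∏ i ∈ Finset.Icc 1 l, α N / (μ i N * (N : ℝ) ^ (((d : ℝ) + 1) / d))) ^
          (((l - 1) * d + l : ℕ) : ℝ)⁻¹ := by
  have hS : 0 < (N : ℝ) * α N ^ ((l - 1) * d) * ∏ i ∈ Finset.Icc 1 l, μ i N := by
    have := Finset.prod_pos hμ
    positivity
  have hbeta : 0 < beta d α μ l N := Real.rpow_pos_of_pos hS _
  rw [← beta_mul_div_rpow_pow hd hl hN hα hμ, Real.pow_rpow_inv_natCast (by positivity) (by omega)]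

/-- Lemma 3.6: if `μ_1 ≫ α/N^{(d+1)/d}` and the mutation rates are asymptotically
increasing, then `β_l ≪ N^{1/d}/α`. -/
theorem stmt3 (d l : ℕ) (hd : 1 ≤ d) (hl : 1 ≤ l)
    (α : ℕ → ℝ) (μ : ℕ → ℕ → ℝ)
    (hα : ∀ N, 0 < α N) (hμ : ∀ i, 1 ≤ i → i ≤ l → ∀ N, 0 < μ i N)
    (h1 : Tendsto (fun N => μ 1 N * (N : ℝ) ^ (((d : ℝ) + 1) / d) / α N) atTop atTop)
    (hinc : ∀ i, 1 ≤ i → i ≤ l - 1 →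
      IsBoundedUnder (· ≤ ·) atTop (fun N => μ i N / μ (i + 1) N)) :
    Tendsto (fun N => beta d α μ l N * α N / (N : ℝ) ^ (1 / (d : ℝ))) atTop (nhds 0) := by
  set p : ℝ := ((d : ℝ) + 1) / d
  have hgrowth := tendsto_mul_atTop_of_chain (c := fun N : ℕ => (N : ℝ) ^ p / α N)
    (by simpa only [mul_div_assoc] using h1) (.of_forall fun N => by have := hα N; positivity)
    (fun i hi hil => .of_forall (hμ i hi hil)) hinc
  have hfactor : ∀ i ∈ Finset.Icc 1 l,
      Tendsto (fun N => α N / (μ i N * (N : ℝ) ^ p)) atTop (nhds 0) := fun i hi =>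
    (hgrowth i (Finset.mem_Icc.1 hi).1 (Finset.mem_Icc.1 hi).2).inv_tendsto_atTop.congr
      fun N => by simp only [Pi.inv_apply, ← mul_div_assoc, inv_div]
  have hprod := tendsto_finsetProd _ hfactor
  rw [Finset.prod_eq_zero (Finset.mem_Icc.2 ⟨le_rfl, hl⟩) rfl] at hprod
  have hroot := hprod.rpow_const (p := (((l - 1) * d + l : ℕ) : ℝ)⁻¹) (.inr (by positivity))
  rw [Real.zero_rpow (by positivity)] at hroot
  refine hroot.congr' ?_
  filter_upwards [eventually_gt_atTop 0] with N hN
  exact (beta_mul_div_rpow_eq hd hl hN (hα N) fun i hi =>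
    hμ i (Finset.mem_Icc.1 hi).1 (Finset.mem_Icc.1 hi).2 N).symm
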